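/- For F ∈ SMU(δ=1), the hardness of F and of its doped version D(F) both equal the Horton-Strahler number of the tree T(F) associated to F: hd(F) = hd(D(F)) = hs(T(F)). -/

import Mathlib

/-- Literals: a variable (ℕ) with a polarity. -/
abbrev Lit := ℕ × Bool

/-- Complement of a literal. -/
def Lit.comp (x : Lit) : Lit := (x.1, !x.2)

/-- A clause is a finite set of literals. -/
abbrev Clause := Finset Lit

/-- A clause-set (CNF). -/
abbrev ClauseSet := Finset Clause

/-- Complementation of all literals of a clause. -/
def Clause.compl (C : Clause) : Clause := C.image Lit.comp

/-- Value of a literal under a total assignment. -/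
def Lit.eval (a : ℕ → Bool) (x : Lit) : Bool := if x.2 then a x.1 else !(a x.1)

/-- A clause is satisfied by an assignment iff some literal evaluates to true. -/
def Clause.sat (a : ℕ → Bool) (C : Clause) : Prop := ∃ x ∈ C, Lit.eval a x = true

/-- An assignment satisfies a clause-set (as CNF) iff it satisfies every clause. -/
def satisfies (a : ℕ → Bool) (F : ClauseSet) : Prop := ∀ C ∈ F, Clause.sat a C

/-- Semantic entailment of a clause. -/
def entails (F : ClauseSet) (C : Clause) : Prop := ∀ a, satisfies a F → Clause.sat a C

def unsat (F : ClauseSet) : Prop := ¬ ∃ a, satisfies a F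

/-- Logical equivalence of clause-sets. -/
def equivCls (F G : ClauseSet) : Prop := ∀ a, satisfies a F ↔ satisfies a G

/-- Minimally unsatisfiable clause-sets. -/
def minUnsat (F : ClauseSet) : Prop := unsat F ∧ ∀ F' ⊂ F, ¬ unsat F'

/-- A clause is complement-free (no clashing pair). -/
def tautFree (C : Clause) : Prop := ∀ x ∈ C, Lit.comp x ∉ C

/-- F is a minimal premise set for clause C. -/
def mpsFor (F : ClauseSet) (C : Clause) : Prop :=
  tautFree C ∧ entails F C ∧ ∀ F' ⊂ F, ¬ entails F' C

/-- F is a minimal premise set. -/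
def isMps (F : ClauseSet) : Prop := ∃ C, mpsFor F C

/-- C is a prime implicate of F. -/
def primeImp (F : ClauseSet) (C : Clause) : Prop :=
  tautFree C ∧ entails F C ∧ ∀ C' ⊂ C, ¬ entails F C'

/-- The set of all prime implicates of F. -/
def primeSet (F : ClauseSet) : Set Clause := {C | primeImp F C}

/-- The set of literals occurring in F. -/
def lits (F : ClauseSet) : Finset Lit := F.sup id

/-- The pure clause of F: the set of pure literals of F. -/
def pureC (F : ClauseSet) : Clause := (lits F).filter (fun x => Lit.comp x ∉ lits F)

def varsC (C : Clause) : Finset ℕ := C.image Prod.fst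

def vars (F : ClauseSet) : Finset ℕ := F.sup varsC

/-- Partial assignments. -/
abbrev PAssign := ℕ → Option Bool

/-- Value of a literal under a partial assignment. -/
def Lit.pval (φ : PAssign) (x : Lit) : Option Bool :=
  (φ x.1).map (fun b => if x.2 then b else !b)

/-- Removing falsified literals from a clause. -/
def papplyC (φ : PAssign) (C : Clause) : Clause := C.filter (fun x => Lit.pval φ x ≠ some false)

/-- A clause is satisfied by a partial assignment. -/
def csat (φ : PAssign) (C : Clause) : Prop := ∃ x ∈ C, Lit.pval φ x = some true

instance (φ : PAssign) (C : Clause) : Decidable (csat φ C) := by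
  unfold csat; exact inferInstance

/-- Application φ * F of a partial assignment to a clause-set. -/
def papply (φ : PAssign) (F : ClauseSet) : ClauseSet :=
  (F.filter (fun C => ¬ csat φ C)).image (papplyC φ)

/-- The partial assignment setting precisely the pure literals of F to false. -/
def pureFalse (F : ClauseSet) : PAssign := fun v =>
  if ((v, true) : Lit) ∈ pureC F then some false
  else if ((v, false) : Lit) ∈ pureC F then some true
  else none

/-- Doping: add a fresh positive variable `u C` to every clause C. -/
def dope (u : Clause → ℕ) (F : ClauseSet) : ClauseSet :=
  F.image (fun C => insert ((u C, true) : Lit) C)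

/-- The doping variables are fresh and pairwise distinct. -/
def freshDoping (u : Clause → ℕ) (F : ClauseSet) : Prop :=
  (∀ C ∈ F, u C ∉ vars F) ∧ Set.InjOn u ↑F

/-- Resolution trees: axioms at leaves, resolution steps at inner nodes
(with the designated resolution literal). -/
inductive ResTree where
  | ax : Clause → ResTree
  | res : Lit → ResTree → ResTree → ResTree

/-- Conclusion clause of a resolution tree. -/
def ResTree.concl : ResTree → Clause
  | .ax C => C
  | .res x T1 T2 => (T1.concl ∪ T2.concl) \ {x, Lit.comp x}

/-- Validity: at each step the two parents clash in exactly the resolution literal. -/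
def ResTree.valid : ResTree → Prop
  | .ax _ => True
  | .res x T1 T2 => T1.valid ∧ T2.valid ∧ T1.concl ∩ Clause.compl T2.concl = {x}

/-- Axioms (leaf clauses) of a resolution tree. -/
def ResTree.axioms : ResTree → ClauseSet
  | .ax C => {C}
  | .res _ T1 T2 => T1.axioms ∪ T2.axioms

/-- Horton-Strahler number of a resolution tree. -/
def ResTree.hts : ResTree → ℕ
  | .ax _ => 0
  | .res _ T1 T2 => if T1.hts = T2.hts then T1.hts + 1 else max T1.hts T2.hts

/-- Regularity: no resolution variable repeated on a root-to-leaf path. -/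
def ResTree.regAux : ResTree → Finset ℕ → Prop
  | .ax _, _ => True
  | .res x T1 T2, S => x.1 ∉ S ∧ T1.regAux (insert x.1 S) ∧ T2.regAux (insert x.1 S)

def ResTree.regular (T : ResTree) : Prop := T.regAux ∅

/-- k-resolution: each step has a parent clause of length at most k. -/
def ResTree.kres (k : ℕ) : ResTree → Prop
  | .ax _ => True
  | .res _ T1 T2 => (T1.concl.card ≤ k ∨ T2.concl.card ≤ k) ∧ T1.kres k ∧ T2.kres k

/-- F has a resolution refutation of Horton-Strahler number at most k. -/
def refutesLe (F : ClauseSet) (k : ℕ) : Prop :=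
  ∃ T : ResTree, T.valid ∧ T.axioms ⊆ F ∧ T.concl = ∅ ∧ T.hts ≤ k

/-- Hardness at most k: every unsatisfiable instantiation has a refutation of
Horton-Strahler number at most k. -/
def hdLe (F : ClauseSet) (k : ℕ) : Prop :=
  ∀ φ : PAssign, unsat (papply φ F) → refutesLe (papply φ F) k

/-- Hardness. -/
noncomputable def hd (F : ClauseSet) : ℕ := sInf {k | hdLe F k}

/-- F has a k-resolution refutation. -/
def kresRefutes (F : ClauseSet) (k : ℕ) : Prop :=
  ∃ T : ResTree, T.valid ∧ T.axioms ⊆ F ∧ T.concl = ∅ ∧ ResTree.kres k T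

/-- Asymmetric width-hardness at most k. -/
def whdLe (F : ClauseSet) (k : ℕ) : Prop :=
  ∀ φ : PAssign, unsat (papply φ F) → kresRefutes (papply φ F) k

/-- Hyperedge E^k_C of the trigger hypergraph of F. -/
def Ek (F : ClauseSet) (k : ℕ) (C : Clause) : Set Clause :=
  {C' | primeImp F C' ∧ C' ∩ Clause.compl C = ∅ ∧ (C' \ C).card ≤ k}


/-- Variable-labelled full binary trees (labels on inner nodes). -/
inductive LTree where
  | leaf : LTree
  | node : ℕ → LTree → LTree → LTree

def LTree.vars : LTree → Finset ℕ
  | .leaf => ∅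
  | .node v t1 t2 => insert v (t1.vars ∪ t2.vars)

/-- All inner-node labels are distinct. -/
def LTree.distinct : LTree → Prop
  | .leaf => True
  | .node v t1 t2 =>
      v ∉ t1.vars ∧ v ∉ t2.vars ∧ Disjoint t1.vars t2.vars ∧ t1.distinct ∧ t2.distinct

def LTree.hs : LTree → ℕ
  | .leaf => 0
  | .node _ t1 t2 => if t1.hs = t2.hs then t1.hs + 1 else max t1.hs t2.hs

def LTree.minDepth : LTree → ℕ
  | .leaf => 0
  | .node _ t1 t2 => 1 + min t1.minDepth t2.minDepth

/-- Leaf clauses (edge literals from the root, accumulated in `C`). -/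
def LTree.clausesAux : LTree → Clause → ClauseSet
  | .leaf, C => {C}
  | .node v t1 t2, C =>
      t1.clausesAux (insert ((v, true) : Lit) C) ∪ t2.clausesAux (insert ((v, false) : Lit) C)

/-- The SMU(δ=1) clause-set associated to a labelled tree. -/
def smu1 (T : LTree) : ClauseSet := T.clausesAux ∅

/-- The clause-sets of leaves of the subtrees rooted at depth exactly k. -/
def LTree.depthClauses : ℕ → LTree → Clause → Finset ClauseSet
  | 0, t, C => {t.clausesAux C}
  | _ + 1, .leaf, _ => ∅
  | k + 1, .node v t1 t2, C =>
      t1.depthClauses k (insert ((v, true) : Lit) C) ∪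
        t2.depthClauses k (insert ((v, false) : Lit) C)

/-!
Restricting `smu1 T` by a partial assignment `φ` yields `smu1` of the restricted tree, whose
Horton–Strahler number is at most that of `T`, and every `smu1 t` has a tree-like refutation of
Horton–Strahler number `t.hs` read off `t`: this is the upper bound. For the lower bound, a
resolution step on `w` is matched by splitting the tree on `w`, which costs at most one
Horton–Strahler level; by induction, any resolution tree whose conclusion is falsified by `α` is
at least as hard as `T` restricted by `α`. For `D(F)`, setting all doping variables false
recovers `F`, and an unsatisfiable restriction of `D(F)` contains the whole restriction of `F`,
since the latter is minimally unsatisfiable.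
-/

open Function

theorem Lit.comp_comp (x : Lit) : x.comp.comp = x := by
  simp [Lit.comp]

theorem Lit.comp_ne (x : Lit) : x.comp ≠ x := by
  simp [Lit.comp, Prod.ext_iff]

theorem Clause.mem_compl {C : Clause} {x : Lit} : x ∈ C.compl ↔ x.comp ∈ C := by
  refine ⟨fun h => ?_, fun h => Finset.mem_image.2 ⟨x.comp, h, x.comp_comp⟩⟩
  obtain ⟨y, hy, rfl⟩ := Finset.mem_image.1 h
  rwa [y.comp_comp]

theorem Clause.compl_insert (x : Lit) (C : Clause) :
    (insert x C).compl = insert x.comp C.compl :=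
  Finset.image_insert _ _ _

theorem tautFree_iff_inter_compl_eq_empty {C : Clause} : tautFree C ↔ C ∩ C.compl = ∅ := by
  simp [tautFree, Finset.eq_empty_iff_forall_notMem, Clause.mem_compl]

theorem tautFree.insert {C : Clause} {x : Lit} (hC : tautFree C) (hx : x.comp ∉ C) :
    tautFree (insert x C) := by
  intro y hy hyc
  rcases Finset.mem_insert.1 hy with rfl | hy
  · exact hx (Finset.mem_of_mem_insert_of_ne hyc y.comp_ne)
  · rcases Finset.mem_insert.1 hyc with h | h
    · exact hx (by rwa [← h, y.comp_comp])
    · exact hC y hy h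

def hsNode (a b : ℕ) : ℕ := if a = b then a + 1 else max a b

theorem LTree.hs_node (v : ℕ) (t₁ t₂ : LTree) :
    (LTree.node v t₁ t₂).hs = hsNode t₁.hs t₂.hs := rfl

theorem ResTree.hts_res (x : Lit) (R₁ R₂ : ResTree) :
    (ResTree.res x R₁ R₂).hts = hsNode R₁.hts R₂.hts := rfl

theorem hsNode_comm (a b : ℕ) : hsNode a b = hsNode b a := by
  unfold hsNode; split_ifs <;> omega

theorem hsNode_mono {a a' b b' : ℕ} (ha : a ≤ a') (hb : b ≤ b') :
    hsNode a b ≤ hsNode a' b' := by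
  unfold hsNode; split_ifs <;> omega

theorem le_hsNode_left (a b : ℕ) : a ≤ hsNode a b := by
  unfold hsNode; split_ifs <;> omega

theorem le_hsNode_right (a b : ℕ) : b ≤ hsNode a b :=
  hsNode_comm b a ▸ le_hsNode_left b a

theorem hsNode_hsNode_le (a b c : ℕ) :
    hsNode (hsNode a b) c ≤ hsNode (hsNode a c) (hsNode b c) := by
  unfold hsNode; split_ifs <;> omega

namespace LTree

/-- The tree of `φ * smu1 t`, see `papply_smu1`. -/
def reduce (φ : PAssign) : LTree → LTree
  | .leaf => .leaf
  | .node v t₁ t₂ =>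
    match φ v with
    | some true => t₂.reduce φ
    | some false => t₁.reduce φ
    | none => .node v (t₁.reduce φ) (t₂.reduce φ)

variable {φ ψ : PAssign} {v : ℕ} {t t₁ t₂ : LTree}

theorem reduce_node_of_eq_none (h : φ v = none) :
    (node v t₁ t₂).reduce φ = node v (t₁.reduce φ) (t₂.reduce φ) := by
  simp [reduce, h]

theorem reduce_node_of_eq_some (c : Bool) (h : φ v = some c) :
    (node v t₁ t₂).reduce φ = (cond c t₂ t₁).reduce φ := by
  cases c <;> simp [reduce, h]

theorem left_subset_vars_node : t₁.vars ⊆ (node v t₁ t₂).vars := by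
  intro w; simp +contextual [LTree.vars]

theorem right_subset_vars_node : t₂.vars ⊆ (node v t₁ t₂).vars := by
  intro w; simp +contextual [LTree.vars]

theorem reduce_congr : ∀ {t : LTree}, (∀ w ∈ t.vars, φ w = ψ w) → t.reduce φ = t.reduce ψ
  | .leaf, _ => rfl
  | .node v t₁ t₂, h => by
    have h₁ := reduce_congr fun w hw => h w (left_subset_vars_node hw)
    have h₂ := reduce_congr fun w hw => h w (right_subset_vars_node hw)
    simp only [reduce, h v (by simp [LTree.vars]), h₁, h₂]

theorem reduce_update_of_notMem {w : ℕ} (b : Option Bool) (h : w ∉ t.vars) :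
    t.reduce (update φ w b) = t.reduce φ :=
  reduce_congr fun _ hv => update_of_ne (ne_of_mem_of_not_mem hv h) _ _

theorem reduce_none (t : LTree) : t.reduce (fun _ => none) = t := by
  induction t with
  | leaf => rfl
  | node v t₁ t₂ ih₁ ih₂ => rw [reduce_node_of_eq_none rfl, ih₁, ih₂]

theorem vars_reduce_subset (φ : PAssign) (t : LTree) : (t.reduce φ).vars ⊆ t.vars := by
  induction t with
  | leaf => exact le_rfl
  | node v t₁ t₂ ih₁ ih₂ =>
    rcases h : φ v with _ | c
    · rw [reduce_node_of_eq_none h]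
      exact Finset.insert_subset_insert _ (Finset.union_subset_union ih₁ ih₂)
    · rw [reduce_node_of_eq_some c h]
      cases c
      exacts [ih₁.trans left_subset_vars_node, ih₂.trans right_subset_vars_node]

theorem distinct.reduce (φ : PAssign) : ∀ {t : LTree}, t.distinct → (t.reduce φ).distinct
  | .leaf, _ => trivial
  | .node v t₁ t₂, ⟨hv₁, hv₂, hdisj, h₁, h₂⟩ => by
    rcases h : φ v with _ | c
    · rw [reduce_node_of_eq_none h]
      exact ⟨fun hc => hv₁ (vars_reduce_subset φ t₁ hc), fun hc => hv₂ (vars_reduce_subset φ t₂ hc),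
        hdisj.mono (vars_reduce_subset φ t₁) (vars_reduce_subset φ t₂), h₁.reduce φ, h₂.reduce φ⟩
    · rw [reduce_node_of_eq_some c h]
      cases c
      exacts [h₁.reduce φ, h₂.reduce φ]

theorem hs_reduce_le (φ : PAssign) (t : LTree) : (t.reduce φ).hs ≤ t.hs := by
  induction t with
  | leaf => exact le_rfl
  | node v t₁ t₂ ih₁ ih₂ =>
    rcases h : φ v with _ | c
    · rw [reduce_node_of_eq_none h, hs_node, hs_node]
      exact hsNode_mono ih₁ ih₂
    · rw [reduce_node_of_eq_some c h, hs_node]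
      cases c
      exacts [ih₁.trans (le_hsNode_left _ _), ih₂.trans (le_hsNode_right _ _)]

/-- Splitting on any variable `w` costs at most one Horton–Strahler node: this is the semantic
counterpart of a resolution step on `w`. -/
theorem distinct.hs_reduce_le_hsNode {t : LTree} (ht : t.distinct) (φ : PAssign) (w : ℕ) :
    (t.reduce φ).hs ≤
      hsNode (t.reduce (update φ w (some false))).hs (t.reduce (update φ w (some true))).hs := by
  induction t with
  | leaf => exact Nat.zero_le _
  | node v t₁ t₂ ih₁ ih₂ =>
    obtain ⟨hv₁, hv₂, hdisj, h₁, h₂⟩ := ht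
    by_cases hvw : v = w
    · subst hvw
      have hsel : ∀ b, (node v t₁ t₂).reduce (update φ v (some b)) = (cond b t₂ t₁).reduce φ := by
        intro b
        rw [reduce_node_of_eq_some b (update_self _ _ _)]
        cases b
        exacts [reduce_update_of_notMem _ hv₁, reduce_update_of_notMem _ hv₂]
      rw [hsel, hsel]
      rcases h : φ v with _ | c
      · rw [reduce_node_of_eq_none h]; rfl
      · rw [reduce_node_of_eq_some c h]
        cases c
        exacts [le_hsNode_left _ _, le_hsNode_right _ _]
    · have hupd : ∀ b, update φ w b v = φ v := fun b => update_of_ne hvw _ _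
      rcases h : φ v with _ | c
      · rw [reduce_node_of_eq_none h, reduce_node_of_eq_none ((hupd _).trans h),
          reduce_node_of_eq_none ((hupd _).trans h), hs_node, hs_node, hs_node]
        by_cases hw : w ∈ t₁.vars
        · have hw₂ : w ∉ t₂.vars := Finset.disjoint_left.1 hdisj hw
          rw [reduce_update_of_notMem _ hw₂, reduce_update_of_notMem _ hw₂]
          exact (hsNode_mono (ih₁ h₁) le_rfl).trans (hsNode_hsNode_le _ _ _)
        · rw [reduce_update_of_notMem _ hw, reduce_update_of_notMem _ hw]
          simp only [hsNode_comm (t₁.reduce φ).hs]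
          exact (hsNode_mono (ih₂ h₂) le_rfl).trans (hsNode_hsNode_le _ _ _)
      · rw [reduce_node_of_eq_some c h, reduce_node_of_eq_some c ((hupd _).trans h),
          reduce_node_of_eq_some c ((hupd _).trans h)]
        cases c
        exacts [ih₁ h₁, ih₂ h₂]

variable {C D : Clause}

theorem subset_of_mem_clausesAux : ∀ {t : LTree} {C D : Clause}, D ∈ t.clausesAux C → C ⊆ D
  | .leaf, _, _, h => (Finset.mem_singleton.1 h).ge
  | .node _ _ _, _, _, h => by
    rcases Finset.mem_union.1 h with h | h
    all_goals exact (Finset.subset_insert _ _).trans (subset_of_mem_clausesAux h)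

theorem mem_of_mem_clausesAux_insert {x : Lit} (h : D ∈ t.clausesAux (insert x C)) : x ∈ D :=
  subset_of_mem_clausesAux h (Finset.mem_insert_self _ _)

/-- `C` can label the path from the root down to a copy of `t`. -/
def Admits (t : LTree) (C : Clause) : Prop := tautFree C ∧ ∀ x ∈ C, x.1 ∉ t.vars

theorem admits_empty (t : LTree) : t.Admits ∅ := ⟨by simp [tautFree], by simp⟩

theorem Admits.mono {t' : LTree} (h : t.Admits C) (hsub : t'.vars ⊆ t.vars) : t'.Admits C :=
  ⟨h.1, fun x hx hx' => h.2 x hx (hsub hx')⟩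

theorem Admits.notMem_node (h : (node v t₁ t₂).Admits C) (b : Bool) : ((v, b) : Lit) ∉ C :=
  fun hb => h.2 _ hb (by simp [LTree.vars])

theorem Admits.insert_of_notMem (h : t.Admits C) (hvt : v ∉ t.vars) (hvC : ∀ b, ((v, b) : Lit) ∉ C)
    (b : Bool) : t.Admits (insert (v, b) C) := by
  refine ⟨h.1.insert (hvC _), fun x hx => ?_⟩
  rcases Finset.mem_insert.1 hx with rfl | hx
  exacts [hvt, h.2 x hx]

theorem Admits.left (ht : (node v t₁ t₂).distinct) (h : (node v t₁ t₂).Admits C) :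
    t₁.Admits (insert (v, true) C) :=
  (h.mono left_subset_vars_node).insert_of_notMem ht.1 h.notMem_node true

theorem Admits.right (ht : (node v t₁ t₂).distinct) (h : (node v t₁ t₂).Admits C) :
    t₂.Admits (insert (v, false) C) :=
  (h.mono right_subset_vars_node).insert_of_notMem ht.2.1 h.notMem_node false

theorem tautFree_of_mem_clausesAux : ∀ {t : LTree} {C D : Clause}, t.distinct → t.Admits C →
    D ∈ t.clausesAux C → tautFree D
  | .leaf, _, _, _, hC, hD => Finset.mem_singleton.1 hD ▸ hC.1
  | .node _ _ _, _, _, ht, hC, hD => by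
    rcases Finset.mem_union.1 hD with hD | hD
    exacts [tautFree_of_mem_clausesAux ht.2.2.2.1 (hC.left ht) hD,
      tautFree_of_mem_clausesAux ht.2.2.2.2 (hC.right ht) hD]

end LTree

theorem tautFree_of_mem_smu1 {t : LTree} (ht : t.distinct) {D : Clause} (hD : D ∈ smu1 t) :
    tautFree D :=
  LTree.tautFree_of_mem_clausesAux ht (t.admits_empty) hD

def refTree : LTree → Clause → ResTree
  | .leaf, C => .ax C
  | .node v t₁ t₂, C =>
    .res (v, true) (refTree t₁ (insert (v, true) C)) (refTree t₂ (insert (v, false) C))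

theorem refTree_axioms : ∀ (t : LTree) (C : Clause), (refTree t C).axioms = t.clausesAux C
  | .leaf, _ => rfl
  | .node _ t₁ t₂, _ => by rw [refTree, ResTree.axioms, refTree_axioms t₁, refTree_axioms t₂]; rfl

theorem refTree_hts : ∀ (t : LTree) (C : Clause), (refTree t C).hts = t.hs
  | .leaf, _ => rfl
  | .node _ t₁ t₂, _ => by rw [refTree, ResTree.hts_res, refTree_hts t₁, refTree_hts t₂]; rfl

theorem refTree_concl : ∀ {t : LTree} {C : Clause}, t.distinct → t.Admits C →
    (refTree t C).concl = C
  | .leaf, _, _, _ => rfl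
  | .node v _ _, C, ht, hC => by
    rw [refTree, ResTree.concl, refTree_concl ht.2.2.2.1 (hC.left ht),
      refTree_concl ht.2.2.2.2 (hC.right ht)]
    have h₀ := hC.notMem_node false
    have h₁ := hC.notMem_node true
    ext ⟨w, b⟩
    cases b <;> aesop (add simp Lit.comp)

theorem refTree_valid : ∀ {t : LTree} {C : Clause}, t.distinct → t.Admits C → (refTree t C).valid
  | .leaf, _, _, _ => trivial
  | .node v _ _, C, ht, hC => by
    refine ⟨refTree_valid ht.2.2.2.1 (hC.left ht), refTree_valid ht.2.2.2.2 (hC.right ht), ?_⟩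
    rw [refTree_concl ht.2.2.2.1 (hC.left ht), refTree_concl ht.2.2.2.2 (hC.right ht),
      Clause.compl_insert, show Lit.comp (v, false) = (v, true) from rfl,
      ← Finset.insert_inter_distrib,
      tautFree_iff_inter_compl_eq_empty.1 hC.1]
    rfl

theorem refutesLe_smu1 {t : LTree} (ht : t.distinct) : refutesLe (smu1 t) t.hs :=
  ⟨refTree t ∅, refTree_valid ht t.admits_empty, (refTree_axioms t ∅).le,
    refTree_concl ht t.admits_empty, (refTree_hts t ∅).le⟩

section Restriction

variable {φ : PAssign} {x : Lit} {C E : Clause} {F G : ClauseSet}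

theorem mem_papply : E ∈ papply φ F ↔ ∃ C ∈ F, ¬ csat φ C ∧ papplyC φ C = E := by
  simp [papply, and_assoc]

theorem papply_union : papply φ (F ∪ G) = papply φ F ∪ papply φ G := by
  simp [papply, Finset.filter_union, Finset.image_union]

theorem papply_none (F : ClauseSet) : papply (fun _ => none) F = F := by
  have hC : papplyC (fun _ => none) = id := funext fun C =>
    Finset.filter_true_of_mem fun x _ => by simp [Lit.pval]
  have hns : ∀ C, ¬ csat (fun _ => none) C := fun C ⟨x, _, hx⟩ => by simp [Lit.pval] at hx
  simp [papply, hC, hns]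

theorem papplyC_insert_of_pval_eq_false (h : Lit.pval φ x = some false) :
    papplyC φ (insert x C) = papplyC φ C := by
  rw [papplyC, Finset.filter_insert, if_neg (not_not.2 h)]; rfl

theorem papplyC_insert_of_pval_ne_false (h : Lit.pval φ x ≠ some false) :
    papplyC φ (insert x C) = insert x (papplyC φ C) := by
  rw [papplyC, Finset.filter_insert, if_pos h]; rfl

theorem papply_clausesAux_of_csat {t : LTree} (h : csat φ C) : papply φ (t.clausesAux C) = ∅ :=
  Finset.eq_empty_of_forall_notMem fun _ hE => by
    obtain ⟨D, hD, hns, -⟩ := mem_papply.1 hE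
    obtain ⟨x, hx, hxt⟩ := h
    exact hns ⟨x, LTree.subset_of_mem_clausesAux hD hx, hxt⟩

theorem papply_clausesAux (t : LTree) :
    ∀ {C : Clause}, (∀ x ∈ C, Lit.pval φ x ≠ some true) →
      papply φ (t.clausesAux C) = (t.reduce φ).clausesAux (papplyC φ C) := by
  induction t with
  | leaf =>
    intro C hC
    have hns : ¬ csat φ C := fun ⟨x, hx, h⟩ => hC x hx h
    simp [LTree.clausesAux, LTree.reduce, papply, Finset.filter_singleton, hns]
  | node v t₁ t₂ ih₁ ih₂ =>
    intro C hC
    have hins : ∀ b, Lit.pval φ (v, b) ≠ some true →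
        ∀ x ∈ insert (v, b) C, Lit.pval φ x ≠ some true :=
      fun b hb x hx => (Finset.mem_insert.1 hx).elim (· ▸ hb) (hC x)
    rw [LTree.clausesAux, papply_union]
    rcases h : φ v with _ | c
    · have hnone : ∀ b, Lit.pval φ (v, b) = none := fun b => by simp [Lit.pval, h]
      rw [ih₁ (hins true (by simp [hnone])), ih₂ (hins false (by simp [hnone])),
        papplyC_insert_of_pval_ne_false (by simp [hnone]),
        papplyC_insert_of_pval_ne_false (by simp [hnone]), LTree.reduce_node_of_eq_none h]
      rfl
    · have hval : ∀ b, Lit.pval φ (v, b) = some (b == c) := fun b => by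
        cases b <;> cases c <;> simp [Lit.pval, h]
      cases c
      · rw [papply_clausesAux_of_csat ⟨_, Finset.mem_insert_self _ _, hval false⟩,
          Finset.union_empty, ih₁ (hins true (by simp [hval])),
          papplyC_insert_of_pval_eq_false (hval true), LTree.reduce_node_of_eq_some false h]
        rfl
      · rw [papply_clausesAux_of_csat ⟨_, Finset.mem_insert_self _ _, hval true⟩,
          Finset.empty_union, ih₂ (hins false (by simp [hval])),
          papplyC_insert_of_pval_eq_false (hval false), LTree.reduce_node_of_eq_some true h]
        rfl

theorem papply_smu1 (φ : PAssign) (t : LTree) : papply φ (smu1 t) = smu1 (t.reduce φ) :=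
  papply_clausesAux t (by simp)

end Restriction

namespace LTree

theorem exists_falsified_mem_clausesAux (a : ℕ → Bool) :
    ∀ (t : LTree) {C : Clause}, (∀ x ∈ C, Lit.eval a x = false) →
      ∃ D ∈ t.clausesAux C, ∀ x ∈ D, Lit.eval a x = false
  | .leaf, C, h => ⟨C, Finset.mem_singleton_self C, h⟩
  | .node v t₁ t₂, C, h => by
    have hins : ∀ b, a v = !b → ∀ x ∈ insert (v, b) C, Lit.eval a x = false := by
      intro b hb x hx
      rcases Finset.mem_insert.1 hx with rfl | hx
      · cases b <;> simp [Lit.eval, hb]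
      · exact h x hx
    cases hv : a v
    · obtain ⟨D, hD, hfal⟩ := exists_falsified_mem_clausesAux a t₁ (hins true hv)
      exact ⟨D, Finset.mem_union_left _ hD, hfal⟩
    · obtain ⟨D, hD, hfal⟩ := exists_falsified_mem_clausesAux a t₂ (hins false hv)
      exact ⟨D, Finset.mem_union_right _ hD, hfal⟩

theorem exists_clash_of_mem_clausesAux : ∀ {t : LTree} {C D D' : Clause},
    D ∈ t.clausesAux C → D' ∈ t.clausesAux C → D ≠ D' → ∃ x ∈ D', x.comp ∈ D
  | .leaf, _, _, _, hD, hD', hne =>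
    (hne ((Finset.mem_singleton.1 hD).trans (Finset.mem_singleton.1 hD').symm)).elim
  | .node v _ _, _, _, _, hD, hD', hne => by
    rcases Finset.mem_union.1 hD with hD | hD <;> rcases Finset.mem_union.1 hD' with hD' | hD'
    · exact exists_clash_of_mem_clausesAux hD hD' hne
    · exact ⟨_, mem_of_mem_clausesAux_insert hD', mem_of_mem_clausesAux_insert hD⟩
    · exact ⟨_, mem_of_mem_clausesAux_insert hD', mem_of_mem_clausesAux_insert hD⟩
    · exact exists_clash_of_mem_clausesAux hD hD' hne

end LTree

theorem unsat_smu1 (t : LTree) : unsat (smu1 t) := by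
  rintro ⟨a, ha⟩
  obtain ⟨D, hD, hfal⟩ := t.exists_falsified_mem_clausesAux a (C := ∅) (by simp)
  obtain ⟨x, hx, hxa⟩ := ha D hD
  simp [hfal x hx] at hxa

theorem satisfies_erase_smu1 {t : LTree} (ht : t.distinct) {D : Clause} (hD : D ∈ smu1 t) :
    ∃ a, satisfies a ((smu1 t).erase D) := by
  -- `a` falsifies exactly the literals of `D`; every other clause clashes with `D`.
  refine ⟨fun v => decide (((v, false) : Lit) ∈ D), fun D' hD' => ?_⟩
  obtain ⟨hne, hD'⟩ := Finset.mem_erase.1 hD'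
  obtain ⟨⟨w, b⟩, hx, hxc⟩ := LTree.exists_clash_of_mem_clausesAux hD hD' hne.symm
  refine ⟨(w, b), hx, ?_⟩
  cases b
  · have : ((w, false) : Lit) ∉ D := tautFree_of_mem_smu1 ht hD _ hxc
    simp [Lit.eval, this]
  · simpa [Lit.eval, Lit.comp] using hxc

theorem minUnsat_smu1 {t : LTree} (ht : t.distinct) : minUnsat (smu1 t) := by
  refine ⟨unsat_smu1 t, fun F' hF' hunsat => ?_⟩
  obtain ⟨D, hD, hDF'⟩ := Finset.exists_of_ssubset hF'
  obtain ⟨a, ha⟩ := satisfies_erase_smu1 ht hD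
  exact hunsat ⟨a, fun C hC =>
    ha C (Finset.mem_erase.2 ⟨fun h => hDF' (h ▸ hC), hF'.subset hC⟩)⟩

def Falsifies (α : PAssign) (C : Clause) : Prop := ∀ x ∈ C, Lit.pval α x = some false

theorem Falsifies.update {α : PAssign} {C : Clause} (h : Falsifies α C) {w : ℕ}
    (hw : ∀ y ∈ C, y.1 ≠ w) (b : Option Bool) : Falsifies (update α w b) C := fun y hy => by
  rw [← h y hy, Lit.pval, Lit.pval, update_of_ne (hw y hy)]

theorem LTree.reduce_eq_leaf_of_falsifies {α : PAssign} :
    ∀ {t : LTree} {C D : Clause}, D ∈ t.clausesAux C → Falsifies α D → t.reduce α = .leaf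
  | .leaf, _, _, _, _ => rfl
  | .node v _ _, _, _, hD, hfal => by
    rcases Finset.mem_union.1 hD with hD | hD
    · have hv : α v = some false := by
        simpa [Lit.pval] using hfal _ (mem_of_mem_clausesAux_insert hD)
      rw [reduce_node_of_eq_some false hv]
      exact reduce_eq_leaf_of_falsifies hD hfal
    · have hv : α v = some true := by
        simpa [Lit.pval] using hfal _ (mem_of_mem_clausesAux_insert hD)
      rw [reduce_node_of_eq_some true hv]
      exact reduce_eq_leaf_of_falsifies hD hfal

namespace ResTree

variable {x : Lit} {R₁ R₂ : ResTree}

theorem mem_of_concl_inter_compl_eq (hint : R₁.concl ∩ R₂.concl.compl = {x}) :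
    x ∈ R₁.concl ∧ x.comp ∈ R₂.concl := by
  have := Finset.mem_inter.1 (hint ▸ Finset.mem_singleton_self x)
  rwa [Clause.mem_compl] at this

theorem tautFree_concl : ∀ {R : ResTree}, R.valid → (∀ C ∈ R.axioms, tautFree C) →
    tautFree R.concl
  | .ax _, _, hax => hax _ (Finset.mem_singleton_self _)
  | .res x R₁ R₂, ⟨h₁, h₂, hint⟩, hax => by
    have t₁ := tautFree_concl h₁ fun C hC => hax C (Finset.mem_union_left _ hC)
    have t₂ := tautFree_concl h₂ fun C hC => hax C (Finset.mem_union_right _ hC)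
    have hclash : ∀ {y}, y ∈ R₁.concl → y.comp ∈ R₂.concl → y = x := fun hy hyc =>
      Finset.mem_singleton.1 (hint ▸ Finset.mem_inter.2 ⟨hy, Clause.mem_compl.2 hyc⟩)
    intro y hy hyc
    simp only [concl, Finset.mem_sdiff, Finset.mem_union, Finset.mem_insert,
      Finset.mem_singleton, not_or] at hy hyc
    obtain ⟨hy | hy, hyx, hyxc⟩ := hy <;> obtain ⟨hyc | hyc, -, -⟩ := hyc
    · exact t₁ y hy hyc
    · exact hyx (hclash hy hyc)
    · exact hyxc (by rw [← hclash hyc (by rwa [y.comp_comp]), y.comp_comp])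
    · exact t₂ y hy hyc

theorem subset_insert_concl_res (hint : R₁.concl ∩ R₂.concl.compl = {x})
    (t₁ : tautFree R₁.concl) (t₂ : tautFree R₂.concl) :
    R₁.concl ⊆ insert x (res x R₁ R₂).concl ∧ R₂.concl ⊆ insert x.comp (res x R₁ R₂).concl := by
  obtain ⟨hx, hxc⟩ := mem_of_concl_inter_compl_eq hint
  simp only [Finset.subset_iff, concl, Finset.mem_insert, Finset.mem_sdiff, Finset.mem_union,
    Finset.mem_singleton]
  constructor
  · intro y hy
    by_cases hyx : y = x
    · exact Or.inl hyx
    · exact Or.inr ⟨Or.inl hy, not_or.2 ⟨hyx, fun h => t₁ x hx (h ▸ hy)⟩⟩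
  · intro y hy
    by_cases hyx : y = x.comp
    · exact Or.inl hyx
    · exact Or.inr ⟨Or.inr hy, not_or.2 ⟨fun h => t₂ _ hxc (by rwa [x.comp_comp, ← h]), hyx⟩⟩

theorem ne_fst_of_mem_concl_res {y : Lit} (hy : y ∈ (res x R₁ R₂).concl) : y.1 ≠ x.1 := by
  intro h
  simp only [concl, Finset.mem_sdiff, Finset.mem_insert, Finset.mem_singleton, not_or] at hy
  obtain ⟨y₁, y₂⟩ := y
  obtain ⟨x₁, x₂⟩ := x
  cases y₂ <;> cases x₂ <;> simp_all [Lit.comp]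

end ResTree

theorem LTree.distinct.hs_reduce_le_hts {t : LTree} (ht : t.distinct) :
    ∀ {R : ResTree}, R.valid → R.axioms ⊆ smu1 t → ∀ {α : PAssign}, Falsifies α R.concl →
      (t.reduce α).hs ≤ R.hts
  | .ax C, _, hax, α, hfal => by
    rw [t.reduce_eq_leaf_of_falsifies (hax (Finset.mem_singleton_self C)) hfal]
    exact Nat.zero_le _
  | .res (w, p) R₁ R₂, ⟨h₁, h₂, hint⟩, hax, α, hfal => by
    have hax₁ : R₁.axioms ⊆ smu1 t := Finset.union_subset_left hax
    have hax₂ : R₂.axioms ⊆ smu1 t := Finset.union_subset_right hax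
    obtain ⟨sub₁, sub₂⟩ := ResTree.subset_insert_concl_res hint
      (ResTree.tautFree_concl h₁ fun C hC => tautFree_of_mem_smu1 ht (hax₁ hC))
      (ResTree.tautFree_concl h₂ fun C hC => tautFree_of_mem_smu1 ht (hax₂ hC))
    have hfal' := fun b => hfal.update (fun y hy => ResTree.ne_fst_of_mem_concl_res hy) b
    have ih₁ : (t.reduce (update α w (some !p))).hs ≤ R₁.hts :=
      ht.hs_reduce_le_hts h₁ hax₁ fun y hy => (Finset.mem_insert.1 (sub₁ hy)).elim
        (fun h => by cases p <;> simp [h, Lit.pval]) (hfal' _ y)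
    have ih₂ : (t.reduce (update α w (some p))).hs ≤ R₂.hts :=
      ht.hs_reduce_le_hts h₂ hax₂ fun y hy => (Finset.mem_insert.1 (sub₂ hy)).elim
        (fun h => by cases p <;> simp [h, Lit.pval, Lit.comp]) (hfal' _ y)
    rw [ResTree.hts_res]
    refine (ht.hs_reduce_le_hsNode α w).trans ?_
    cases p
    exacts [(hsNode_mono ih₂ ih₁).trans_eq (hsNode_comm _ _), hsNode_mono ih₁ ih₂]

theorem hs_le_of_refutesLe_smu1 {t : LTree} (ht : t.distinct) {k : ℕ}
    (h : refutesLe (smu1 t) k) : t.hs ≤ k := by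
  obtain ⟨R, hval, hax, hconcl, hk⟩ := h
  have := ht.hs_reduce_le_hts hval hax (α := fun _ => none) (by simp [hconcl, Falsifies])
  rw [LTree.reduce_none] at this
  exact this.trans hk

section Doping

variable {u : Clause → ℕ} {φ : PAssign} {F : ClauseSet}

theorem mem_dope {E : Clause} : E ∈ dope u F ↔ ∃ C ∈ F, insert (u C, true) C = E := by
  simp [dope]

theorem fst_mem_vars {C : Clause} {x : Lit} (hC : C ∈ F) (hx : x ∈ C) : x.1 ∈ vars F :=
  Finset.le_sup (f := varsC) hC (Finset.mem_image_of_mem _ hx)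

/-- A doped clause whose doping variable is unassigned is satisfied by that variable alone. -/
theorem papply_subset_papply_dope (hfresh : ∀ C ∈ F, u C ∉ vars F)
    (hmin : minUnsat (papply φ F)) (hunsat : unsat (papply φ (dope u F))) :
    papply φ F ⊆ papply φ (dope u F) := by
  intro D hD
  by_contra hD'
  obtain ⟨a, ha⟩ := not_not.1 (hmin.2 _ (Finset.erase_ssubset hD))
  refine hunsat ⟨fun v => if v ∈ vars F then a v else true, fun E hE => ?_⟩
  obtain ⟨_, hCd, hns, rfl⟩ := mem_papply.1 hE
  obtain ⟨C, hC, rfl⟩ := mem_dope.1 hCd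
  rcases hu : φ (u C) with _ | c
  · refine ⟨(u C, true), Finset.mem_filter.2 ⟨Finset.mem_insert_self _ _, ?_⟩, ?_⟩
    · simp [Lit.pval, hu]
    · simp [Lit.eval, hfresh C hC]
  · cases c
    · rw [papplyC_insert_of_pval_eq_false (by simp [Lit.pval, hu])] at hE ⊢
      have hnsC : ¬ csat φ C := fun ⟨x, hx, hxt⟩ => hns ⟨x, Finset.mem_insert_of_mem hx, hxt⟩
      obtain ⟨x, hx, hxa⟩ := ha _ (Finset.mem_erase.2
        ⟨fun h => hD' (h ▸ hE), mem_papply.2 ⟨C, hC, hnsC, rfl⟩⟩)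
      have hxF : x.1 ∈ vars F := fst_mem_vars hC (Finset.filter_subset _ _ hx)
      exact ⟨x, hx, by simpa [Lit.eval, hxF] using hxa⟩
    · exact (hns ⟨_, Finset.mem_insert_self _ _, by simp [Lit.pval, hu]⟩).elim

def undope (u : Clause → ℕ) (F : ClauseSet) : PAssign :=
  fun v => if v ∈ F.image u then some false else none

theorem papply_undope_dope (hfresh : ∀ C ∈ F, u C ∉ vars F) :
    papply (undope u F) (dope u F) = F := by
  have key : ∀ C ∈ F, ¬ csat (undope u F) (insert (u C, true) C) ∧
      papplyC (undope u F) (insert (u C, true) C) = C := by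
    intro C hC
    have hpu : Lit.pval (undope u F) (u C, true) = some false := by
      simp [Lit.pval, undope, Finset.mem_image_of_mem u hC]
    have hpx : ∀ x ∈ C, Lit.pval (undope u F) x = none := fun x hx => by
      have : x.1 ∉ F.image u := fun h => by
        obtain ⟨C', hC', he⟩ := Finset.mem_image.1 h
        exact hfresh C' hC' (he ▸ fst_mem_vars hC hx)
      simp [Lit.pval, undope, this]
    refine ⟨fun ⟨y, hy, hyt⟩ => ?_, ?_⟩
    · rcases Finset.mem_insert.1 hy with rfl | hy
      · simp [hpu] at hyt
      · simp [hpx y hy] at hyt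
    · rw [papplyC_insert_of_pval_eq_false hpu]
      exact Finset.filter_true_of_mem fun y hy => by simp [hpx y hy]
  ext E
  simp only [mem_papply, mem_dope]
  constructor
  · rintro ⟨_, ⟨C, hC, rfl⟩, -, rfl⟩
    rwa [(key C hC).2]
  · exact fun hE => ⟨_, ⟨E, hE, rfl⟩, key E hE⟩

end Doping

theorem refutesLe.mono {F G : ClauseSet} {k l : ℕ} (h : refutesLe F k) (hFG : F ⊆ G)
    (hkl : k ≤ l) : refutesLe G l :=
  let ⟨R, hval, hax, hconcl, hk⟩ := h
  ⟨R, hval, hax.trans hFG, hconcl, hk.trans hkl⟩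

theorem hd_eq_of_hdLe {F : ClauseSet} {n : ℕ} (h : hdLe F n) (hmin : ∀ k, hdLe F k → n ≤ k) :
    hd F = n :=
  le_antisymm (Nat.sInf_le h) (le_csInf ⟨n, h⟩ hmin)

/-- For F ∈ SMU(δ=1) with associated tree T, the hardness of F and of its doped
version both equal the Horton-Strahler number of T. -/
theorem hd_smu1_eq_hortonStrahler (T : LTree) (hT : T.distinct) (F : ClauseSet)
    (hF : F = smu1 T) (u : Clause → ℕ) (hu : freshDoping u F) :
    hd F = T.hs ∧ hd (dope u F) = T.hs := by
  subst hF
  have hupper : ∀ φ, refutesLe (papply φ (smu1 T)) T.hs := fun φ => by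
    rw [papply_smu1]
    exact (refutesLe_smu1 (hT.reduce φ)).mono le_rfl (T.hs_reduce_le φ)
  have hminUnsat : ∀ φ, minUnsat (papply φ (smu1 T)) := fun φ => by
    rw [papply_smu1]
    exact minUnsat_smu1 (hT.reduce φ)
  have hlower : ∀ {G} (φ : PAssign), papply φ G = smu1 T → ∀ k, hdLe G k → T.hs ≤ k :=
    fun φ hφ k hk => hs_le_of_refutesLe_smu1 hT (hφ ▸ hk φ (hφ ▸ unsat_smu1 T))
  refine ⟨hd_eq_of_hdLe (fun φ _ => hupper φ) (hlower _ (papply_none _)), ?_⟩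
  exact hd_eq_of_hdLe
    (fun φ hφ => (hupper φ).mono (papply_subset_papply_dope hu.1 (hminUnsat φ) hφ) le_rfl)
    (hlower _ (papply_undope_dope hu.1))
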